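/- Let f : [0,∞) → ℝ be continuous with f(r) → 1 as r → ∞ and r > 0 ⇒ f(r) > 0. Suppose g₁, g₂ : [0,∞) → ℝ are two positive C² solutions on (0,∞) of g'' + (1/r) g' - α² g - (1/2)(f² + g² - 1) g = 0 with g_i'(0) = 0, g_i(∞) = 0, both decaying exponentially at infinity and bounded near 0 with g_i(0) > 0. Then g₁ = g₂ on (0,∞). -/

import Mathlib

open Filter Set Topology

/-!
Write `h = g₂ / g₁` and `W r = r (g₁' g₂ - g₂' g₁)` for the radial Wronskian. The equation gives
`h' = -W / (r g₁²)` and `W' = (r/2) g₁ g₂ (g₁² - g₂²)`, so `W` increases wherever `h < 1`, and `h`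
decreases wherever `W ≥ 0`. If `h ρ < 1` and `W ρ ≥ 0`, these two facts feed each other: `h`
stays below `1` on `[ρ, ∞)` and `W` increases there, so far out `W ≥ w > 0` and, `g₁` being
bounded at infinity, `g₁² ≤ C`. Then `h' ≤ -w / (C r)`: `h` decreases like `-log r` and eventually
becomes negative. The case `W ρ < 0` is the same argument after the substitution `r ↦ 1/r`,
which preserves the system and exchanges the behaviour of `g₁` at `0` and at `∞`. Hence
`g₁ ≤ g₂`, and by symmetry `g₁ = g₂`.
-/

section Monotonicity

variable {D : Set ℝ} {f f' : ℝ → ℝ}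

theorem strictMonoOn_of_hasDerivAt_pos (hD : Convex ℝ D) (hf : ∀ x ∈ D, HasDerivAt f (f' x) x)
    (hf' : ∀ x ∈ interior D, 0 < f' x) : StrictMonoOn f D :=
  strictMonoOn_of_hasDerivWithinAt_pos hD (fun x hx => (hf x hx).continuousAt.continuousWithinAt)
    (fun x hx => (hf x (interior_subset hx)).hasDerivWithinAt) hf'

theorem antitoneOn_of_hasDerivAt_nonpos (hD : Convex ℝ D) (hf : ∀ x ∈ D, HasDerivAt f (f' x) x)
    (hf' : ∀ x ∈ interior D, f' x ≤ 0) : AntitoneOn f D :=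
  antitoneOn_of_hasDerivWithinAt_nonpos hD (fun x hx => (hf x hx).continuousAt.continuousWithinAt)
    (fun x hx => (hf x (interior_subset hx)).hasDerivWithinAt) hf'

end Monotonicity

theorem ContinuousOn.lt_of_forall_Ico_lt_imp_lt {α β : Type*} [ConditionallyCompleteLinearOrder α]
    [TopologicalSpace α] [OrderTopology α] [LinearOrder β] [TopologicalSpace β]
    [OrderClosedTopology β] {u : α → β} {a b : α} {c : β} (hu : ContinuousOn u (Icc a b))
    (hab : a ≤ b) (ha : u a < c) (hstep : ∀ x ∈ Ioc a b, (∀ y ∈ Ico a x, u y < c) → u x < c) :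
    u b < c := by
  by_contra! hb
  set S := Icc a b ∩ u ⁻¹' Ici c
  have hSbdd : BddBelow S := ⟨a, fun x hx => hx.1.1⟩
  have hx₀ : sInf S ∈ S :=
    (hu.preimage_isClosed_of_isClosed isClosed_Icc isClosed_Ici).csInf_mem ⟨b, ⟨hab, le_rfl⟩, hb⟩
      hSbdd
  have hax₀ : a < sInf S := hx₀.1.1.lt_of_ne fun h => (h ▸ hx₀.2 : c ≤ u a).not_gt ha
  refine (hstep _ ⟨hax₀, hx₀.1.2⟩ fun y hy => ?_).not_ge hx₀.2
  by_contra! hy'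
  exact hy.2.not_ge (csInf_le hSbdd ⟨⟨hy.1, hy.2.le.trans hx₀.1.2⟩, hy'⟩)

theorem tendsto_atBot_of_hasDerivAt_le_neg_div {h h' : ℝ → ℝ} {a k : ℝ} (ha : 0 < a) (hk : 0 < k)
    (hd : ∀ t ∈ Ici a, HasDerivAt h (h' t) t) (hle : ∀ t ∈ Ici a, h' t ≤ -k / t) :
    Tendsto h atTop atBot := by
  have hanti : AntitoneOn (fun t => h t + k * Real.log t) (Ici a) :=
    antitoneOn_of_hasDerivAt_nonpos (convex_Ici a)
      (fun t ht => (hd t ht).add ((Real.hasDerivAt_log (ha.trans_le ht).ne').const_mul k))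
      (fun t ht => by
        rw [interior_Ici] at ht
        have := hle t (le_of_lt ht : a ≤ t)
        rw [neg_div, div_eq_mul_inv] at this
        linarith)
  have hbound : ∀ t ≥ a, h t ≤ h a + k * Real.log a - k * Real.log t := fun t ht => by
    have := hanti self_mem_Ici ht ht
    simp only at this
    linarith
  refine tendsto_atBot_mono' _ ((eventually_ge_atTop a).mono hbound) ?_
  exact tendsto_atBot_add_const_left _ _
    (tendsto_neg_atTop_atBot.comp (Real.tendsto_log_atTop.const_mul_atTop hk))

/-- Modelled on `h = g₂ / g₁`, the radial Wronskian `W` (with derivative `W'`) and `q = g₁²`. -/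
structure RadialComparison (h W W' q : ℝ → ℝ) : Prop where
  hasDerivAt_ratio : ∀ t > 0, HasDerivAt h (-W t / (t * q t)) t
  hasDerivAt_wronskian : ∀ t > 0, HasDerivAt W (W' t) t
  deriv_wronskian_pos : ∀ t > 0, h t < 1 → 0 < W' t
  ratio_pos : ∀ t > 0, 0 < h t
  weight_pos : ∀ t > 0, 0 < q t

namespace RadialComparison

variable {h W W' q : ℝ → ℝ}

theorem inv (S : RadialComparison h W W' q) :
    RadialComparison (fun s => h s⁻¹) (fun s => -W s⁻¹) (fun s => W' s⁻¹ / s ^ 2)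
      (fun s => q s⁻¹) where
  hasDerivAt_ratio s hs := by
    have hq := S.weight_pos s⁻¹ (inv_pos.2 hs)
    refine ((S.hasDerivAt_ratio s⁻¹ (inv_pos.2 hs)).comp s (hasDerivAt_inv hs.ne')).congr_deriv ?_
    field_simp
  hasDerivAt_wronskian s hs :=
    ((S.hasDerivAt_wronskian s⁻¹ (inv_pos.2 hs)).comp s (hasDerivAt_inv hs.ne')).neg.congr_deriv
      (by field_simp)
  deriv_wronskian_pos s hs hlt :=
    div_pos (S.deriv_wronskian_pos s⁻¹ (inv_pos.2 hs) hlt) (pow_pos hs 2)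
  ratio_pos s hs := S.ratio_pos s⁻¹ (inv_pos.2 hs)
  weight_pos s hs := S.weight_pos s⁻¹ (inv_pos.2 hs)

theorem lt_one_of_wronskian_nonneg (S : RadialComparison h W W' q) {ρ : ℝ} (hρ : 0 < ρ)
    (hρ1 : h ρ < 1) (hWρ : 0 ≤ W ρ) : ∀ t ≥ ρ, h t < 1 := by
  intro t ht
  refine ContinuousOn.lt_of_forall_Ico_lt_imp_lt (fun x hx => ?_) ht hρ1 fun x hx hlt => ?_
  · exact (S.hasDerivAt_ratio x (hρ.trans_le hx.1)).continuousAt.continuousWithinAt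
  have hpos : ∀ y ∈ Icc ρ x, 0 < y := fun y hy => hρ.trans_le hy.1
  have hW : ∀ y ∈ Icc ρ x, 0 ≤ W y := fun y hy =>
    hWρ.trans <| (strictMonoOn_of_hasDerivAt_pos (convex_Icc ρ x)
      (fun z hz => S.hasDerivAt_wronskian z (hpos z hz)) (fun z hz => by
        rw [interior_Icc] at hz
        exact S.deriv_wronskian_pos z (hρ.trans hz.1) (hlt z ⟨hz.1.le, hz.2⟩))).monotoneOn
      ⟨le_rfl, hx.1.le⟩ hy hy.1
  have hanti : AntitoneOn h (Icc ρ x) :=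
    antitoneOn_of_hasDerivAt_nonpos (convex_Icc ρ x)
      (fun z hz => S.hasDerivAt_ratio z (hpos z hz)) fun z hz => by
        have hz' := interior_subset hz
        exact div_nonpos_of_nonpos_of_nonneg (neg_nonpos.2 (hW z hz'))
          (mul_pos (hpos z hz') (S.weight_pos z (hpos z hz'))).le
  exact (hanti ⟨le_rfl, hx.1.le⟩ ⟨hx.1.le, le_rfl⟩ hx.1.le).trans_lt hρ1

theorem one_le_of_wronskian_nonneg (S : RadialComparison h W W' q)
    (hq : IsBoundedUnder (· ≤ ·) atTop q) {ρ : ℝ} (hρ : 0 < ρ) (hWρ : 0 ≤ W ρ) : 1 ≤ h ρ := by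
  by_contra! hρ1
  have hlt := S.lt_one_of_wronskian_nonneg hρ hρ1 hWρ
  have hmono : StrictMonoOn W (Ici ρ) :=
    strictMonoOn_of_hasDerivAt_pos (convex_Ici ρ)
      (fun t ht => S.hasDerivAt_wronskian t (hρ.trans_le ht)) fun t ht => by
        rw [interior_Ici] at ht
        exact S.deriv_wronskian_pos t (hρ.trans ht) (hlt t ht.le)
  obtain ⟨C, hqC⟩ := hq.eventually_le
  obtain ⟨T, hT⟩ := eventually_atTop.1 hqC
  set a := max (ρ + 1) T
  have hρa : ρ < a := (lt_add_one ρ).trans_le (le_max_left _ _)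
  have ha : 0 < a := hρ.trans hρa
  have hw : 0 < W a := hWρ.trans_lt (hmono self_mem_Ici (mem_Ici.2 hρa.le) hρa)
  have hC : 0 < C := (S.weight_pos a ha).trans_le (hT a (le_max_right _ _))
  have hbot : Tendsto h atTop atBot :=
    tendsto_atBot_of_hasDerivAt_le_neg_div ha (div_pos hw hC)
      (fun t ht => S.hasDerivAt_ratio t (ha.trans_le ht)) fun t ht => by
        have ht0 : 0 < t := ha.trans_le (mem_Ici.1 ht)
        have hWt : W a ≤ W t := hmono.monotoneOn (mem_Ici.2 hρa.le)
          (mem_Ici.2 (hρa.le.trans ht)) ht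
        have hqt : q t ≤ C := hT t ((le_max_right _ _).trans ht)
        rw [neg_div, neg_div, neg_le_neg_iff, div_div]
        exact div_le_div₀ (hw.le.trans hWt) hWt (mul_pos ht0 (S.weight_pos t ht0))
          (by rw [mul_comm C]; exact mul_le_mul_of_nonneg_left hqt ht0.le)
  obtain ⟨t, hneg, ht⟩ :=
    ((hbot.eventually (eventually_lt_atBot 0)).and (eventually_gt_atTop 0)).exists
  exact (S.ratio_pos t ht).not_gt hneg

theorem one_le (S : RadialComparison h W W' q) (hq_top : IsBoundedUnder (· ≤ ·) atTop q)
    (hq_zero : IsBoundedUnder (· ≤ ·) (𝓝[>] 0) q) {t : ℝ} (ht : 0 < t) : 1 ≤ h t := by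
  rcases le_or_gt 0 (W t) with hW | hW
  · exact S.one_le_of_wronskian_nonneg hq_top ht hW
  · obtain ⟨B, hB⟩ := hq_zero.eventually_le
    simpa using S.inv.one_le_of_wronskian_nonneg
      (isBoundedUnder_of_eventually_le (tendsto_inv_atTop_nhdsGT_zero.eventually hB))
      (inv_pos.2 ht) (by simpa using hW.le)

end RadialComparison

theorem ContDiffOn.hasDerivAt_and_hasDerivAt_deriv {g : ℝ → ℝ} {s : Set ℝ}
    (hg : ContDiffOn ℝ 2 g s) (hs : IsOpen s) {r : ℝ} (hr : r ∈ s) :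
    HasDerivAt g (deriv g r) r ∧ HasDerivAt (deriv g) (deriv (deriv g) r) r :=
  ⟨((hg.differentiableOn two_ne_zero).differentiableAt (hs.mem_nhds hr)).hasDerivAt,
    (((hg.deriv_of_isOpen hs (by norm_num)).differentiableOn one_ne_zero).differentiableAt
      (hs.mem_nhds hr)).hasDerivAt⟩

def SolvesRadialEq (α : ℝ) (f g : ℝ → ℝ) : Prop :=
  ∀ r ∈ Ioi (0:ℝ), deriv (deriv g) r + (1 / r) * deriv g r - α ^ 2 * g r
    - (1 / 2) * ((f r) ^ 2 + (g r) ^ 2 - 1) * g r = 0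

noncomputable def radialWronskian (g₁ g₂ : ℝ → ℝ) (r : ℝ) : ℝ :=
  r * (deriv g₁ r * g₂ r - deriv g₂ r * g₁ r)

section RadialEq

variable {α : ℝ} {f g₁ g₂ : ℝ → ℝ}

theorem hasDerivAt_radialWronskian (h₁ : ContDiffOn ℝ 2 g₁ (Ioi 0))
    (h₂ : ContDiffOn ℝ 2 g₂ (Ioi 0)) (hode₁ : SolvesRadialEq α f g₁)
    (hode₂ : SolvesRadialEq α f g₂) {r : ℝ} (hr : 0 < r) :
    HasDerivAt (radialWronskian g₁ g₂) (r / 2 * (g₁ r * g₂ r) * (g₁ r ^ 2 - g₂ r ^ 2)) r := by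
  obtain ⟨hd₁, hdd₁⟩ := h₁.hasDerivAt_and_hasDerivAt_deriv isOpen_Ioi hr
  obtain ⟨hd₂, hdd₂⟩ := h₂.hasDerivAt_and_hasDerivAt_deriv isOpen_Ioi hr
  have e₁ := hode₁ r hr
  have e₂ := hode₂ r hr
  refine ((hasDerivAt_id' r).mul ((hdd₁.mul hd₂).sub (hdd₂.mul hd₁))).congr_deriv ?_
  have hr' : r * (1 / r) = 1 := mul_one_div_cancel hr.ne'
  simp only [Pi.mul_apply, Pi.sub_apply]
  linear_combination r * g₂ r * e₁ - r * g₁ r * e₂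
    - (deriv g₁ r * g₂ r - deriv g₂ r * g₁ r) * hr'

theorem radialComparison_of_solvesRadialEq (h₁ : ContDiffOn ℝ 2 g₁ (Ioi 0))
    (h₂ : ContDiffOn ℝ 2 g₂ (Ioi 0)) (hpos₁ : ∀ r ∈ Ioi (0:ℝ), 0 < g₁ r)
    (hpos₂ : ∀ r ∈ Ioi (0:ℝ), 0 < g₂ r) (hode₁ : SolvesRadialEq α f g₁)
    (hode₂ : SolvesRadialEq α f g₂) :
    RadialComparison (fun r => g₂ r / g₁ r) (radialWronskian g₁ g₂)
      (fun r => r / 2 * (g₁ r * g₂ r) * (g₁ r ^ 2 - g₂ r ^ 2)) (fun r => g₁ r ^ 2) where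
  hasDerivAt_ratio r hr := by
    have hg₁ := (hpos₁ r hr).ne'
    refine ((h₂.hasDerivAt_and_hasDerivAt_deriv isOpen_Ioi hr).1.div
      (h₁.hasDerivAt_and_hasDerivAt_deriv isOpen_Ioi hr).1 hg₁).congr_deriv ?_
    rw [radialWronskian]
    field_simp
    ring
  hasDerivAt_wronskian r hr := hasDerivAt_radialWronskian h₁ h₂ hode₁ hode₂ hr
  deriv_wronskian_pos r hr hlt := by
    have hg₁ := hpos₁ r hr
    have hg₂ := hpos₂ r hr
    have hlt' : g₂ r < g₁ r := (div_lt_one hg₁).1 hlt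
    have hr' : (0:ℝ) < r := hr
    exact mul_pos (by positivity) (by nlinarith)
  ratio_pos r hr := div_pos (hpos₂ r hr) (hpos₁ r hr)
  weight_pos r hr := pow_pos (hpos₁ r hr) 2

theorem le_of_solvesRadialEq (h₁ : ContDiffOn ℝ 2 g₁ (Ioi 0))
    (h₂ : ContDiffOn ℝ 2 g₂ (Ioi 0)) (hpos₁ : ∀ r ∈ Ioi (0:ℝ), 0 < g₁ r)
    (hpos₂ : ∀ r ∈ Ioi (0:ℝ), 0 < g₂ r) (hode₁ : SolvesRadialEq α f g₁)
    (hode₂ : SolvesRadialEq α f g₂) (hlim₁ : Tendsto g₁ atTop (𝓝 0))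
    (hbd₁ : ∃ C : ℝ, ∀ r ∈ Ioc (0:ℝ) 1, g₁ r ≤ C) {r : ℝ} (hr : 0 < r) : g₁ r ≤ g₂ r := by
  obtain ⟨C, hC⟩ := hbd₁
  have hq_zero : IsBoundedUnder (· ≤ ·) (𝓝[>] 0) fun r => g₁ r ^ 2 :=
    isBoundedUnder_of_eventually_le <| mem_of_superset (Ioc_mem_nhdsGT one_pos) fun t ht =>
      pow_le_pow_left₀ (hpos₁ t ht.1).le (hC t ht) 2
  have h := (radialComparison_of_solvesRadialEq h₁ h₂ hpos₁ hpos₂ hode₁ hode₂).one_le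
    (hlim₁.pow 2).isBoundedUnder_le hq_zero hr
  exact (one_le_div (hpos₁ r hr)).1 h

end RadialEq

theorem stmt5_general (α : ℝ) (f g₁ g₂ : ℝ → ℝ)
    (h₁ : ContDiffOn ℝ 2 g₁ (Ioi 0)) (h₂ : ContDiffOn ℝ 2 g₂ (Ioi 0))
    (hpos₁ : ∀ r ∈ Ioi (0:ℝ), 0 < g₁ r) (hpos₂ : ∀ r ∈ Ioi (0:ℝ), 0 < g₂ r)
    (hode₁ : ∀ r ∈ Ioi (0:ℝ),
      deriv (deriv g₁) r + (1 / r) * deriv g₁ r - α ^ 2 * g₁ r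
        - (1 / 2) * ((f r) ^ 2 + (g₁ r) ^ 2 - 1) * g₁ r = 0)
    (hode₂ : ∀ r ∈ Ioi (0:ℝ),
      deriv (deriv g₂) r + (1 / r) * deriv g₂ r - α ^ 2 * g₂ r
        - (1 / 2) * ((f r) ^ 2 + (g₂ r) ^ 2 - 1) * g₂ r = 0)
    (hlim₁ : Tendsto g₁ atTop (nhds 0)) (hlim₂ : Tendsto g₂ atTop (nhds 0))
    (hbd₁ : ∃ C : ℝ, ∀ r ∈ Ioc (0:ℝ) 1, g₁ r ≤ C)
    (hbd₂ : ∃ C : ℝ, ∀ r ∈ Ioc (0:ℝ) 1, g₂ r ≤ C) :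
    ∀ r ∈ Ioi (0:ℝ), g₁ r = g₂ r := fun _ hr =>
  le_antisymm (le_of_solvesRadialEq h₁ h₂ hpos₁ hpos₂ hode₁ hode₂ hlim₁ hbd₁ hr)
    (le_of_solvesRadialEq h₂ h₁ hpos₂ hpos₁ hode₂ hode₁ hlim₂ hbd₂ hr)

/-- Uniqueness for the neutral scalar profile: two positive C² solutions on `(0,∞)`
of `g'' + (1/r) g' - α² g - (1/2)(f² + g² - 1) g = 0` with `g'(0) = 0`, `g(∞) = 0`,
exponential decay at infinity, boundedness near `0` and `g(0) > 0` coincide. -/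
theorem stmt5 (α : ℝ) (hα : α > 0) (f g₁ g₂ : ℝ → ℝ)
    (hf : ContinuousOn f (Ici 0)) (hflim : Tendsto f atTop (nhds 1))
    (hfpos : ∀ r > (0:ℝ), 0 < f r)
    (h₁ : ContDiffOn ℝ 2 g₁ (Ioi 0)) (h₂ : ContDiffOn ℝ 2 g₂ (Ioi 0))
    (hpos₁ : ∀ r ∈ Ioi (0:ℝ), 0 < g₁ r) (hpos₂ : ∀ r ∈ Ioi (0:ℝ), 0 < g₂ r)
    (hode₁ : ∀ r ∈ Ioi (0:ℝ),
      deriv (deriv g₁) r + (1 / r) * deriv g₁ r - α ^ 2 * g₁ r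
        - (1 / 2) * ((f r) ^ 2 + (g₁ r) ^ 2 - 1) * g₁ r = 0)
    (hode₂ : ∀ r ∈ Ioi (0:ℝ),
      deriv (deriv g₂) r + (1 / r) * deriv g₂ r - α ^ 2 * g₂ r
        - (1 / 2) * ((f r) ^ 2 + (g₂ r) ^ 2 - 1) * g₂ r = 0)
    (hd₁ : deriv g₁ 0 = 0) (hd₂ : deriv g₂ 0 = 0)
    (hlim₁ : Tendsto g₁ atTop (nhds 0)) (hlim₂ : Tendsto g₂ atTop (nhds 0))
    (hdec₁ : ∃ C > (0:ℝ), ∃ c > (0:ℝ), ∀ r ≥ (1:ℝ), g₁ r ≤ C * Real.exp (-c * r))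
    (hdec₂ : ∃ C > (0:ℝ), ∃ c > (0:ℝ), ∀ r ≥ (1:ℝ), g₂ r ≤ C * Real.exp (-c * r))
    (hbd₁ : ∃ C : ℝ, ∀ r ∈ Ioc (0:ℝ) 1, g₁ r ≤ C)
    (hbd₂ : ∃ C : ℝ, ∀ r ∈ Ioc (0:ℝ) 1, g₂ r ≤ C)
    (h0₁ : 0 < g₁ 0) (h0₂ : 0 < g₂ 0) :
    ∀ r ∈ Ioi (0:ℝ), g₁ r = g₂ r :=
  stmt5_general α f g₁ g₂ h₁ h₂ hpos₁ hpos₂ hode₁ hode₂ hlim₁ hlim₂ hbd₁ hbd₂
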